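/- arXiv:2605.13622 — 4 statements merged into one kernel-verified Lean document; each statement's English description precedes it below -/
import Mathlib

section
/- Let n ≥ 2 be an integer. The zero-divisor graph Γ(ℤ/nℤ) is cochordal if and only if n has one of the following forms: n = p^a, n = p^a·q, or n = p·q·r, where p, q, r are distinct primes and a ≥ 1. -/
/-- The set of nonzero zero-divisors of a commutative ring. -/
def nzdSet (R : Type*) [CommRing R] : Set R :=
  {x | x ≠ 0 ∧ ∃ y : R, y ≠ 0 ∧ x * y = 0}

/-- The zero-divisor graph of a commutative ring: vertices are the nonzero
zero-divisors, and distinct vertices are adjacent iff their product is zero. -/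
def zdGraph (R : Type*) [CommRing R] : SimpleGraph (nzdSet R) where
  Adj x y := x ≠ y ∧ (x : R) * (y : R) = 0
  symm := ⟨fun x y h => ⟨h.1.symm, by rw [mul_comm]; exact h.2⟩⟩
  loopless := ⟨fun x h => h.1 rfl⟩

/-- `G` has an induced cycle on `n` vertices: an injection of `ZMod n` into the
vertices such that adjacency holds exactly between cyclically consecutive indices. -/
def HasInducedCycle {V : Type*} (G : SimpleGraph V) (n : ℕ) : Prop :=
  ∃ f : ZMod n → V, Function.Injective f ∧
    ∀ i j : ZMod n, G.Adj (f i) (f j) ↔ (j = i + 1 ∨ i = j + 1)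

/-- A graph is chordal if it has no induced cycle of length at least `4`. -/
def IsChordal {V : Type*} (G : SimpleGraph V) : Prop :=
  ∀ n : ℕ, 4 ≤ n → ¬ HasInducedCycle G n

/-- A graph is cochordal if its complement is chordal. -/
def IsCochordal {V : Type*} (G : SimpleGraph V) : Prop :=
  IsChordal Gᶜ

/-!
In the complement of `Γ(ℤ/n)` an induced cycle `x₀, x₁, …` of length at least four satisfies
`xᵢ xᵢ₊₁ ≠ 0` and `xᵢ xᵢ₊₂ = 0`. For `n = p ^ a` or `p ^ a q`, the entry of least `p`-adic
valuation makes `p ^ a ∣ xⱼ xₖ` for one fixed `k` and every `j`; since moreover `q` divides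
`xₖ₋₁` or `xₖ₊₁`, one of the products `xₖ₋₁ xₖ`, `xₖ xₖ₊₁` vanishes. For `n = pqr`, every
consecutive pair `xᵢ, xᵢ₊₁` misses one of the three primes, and the pairs starting at
`i = 0, 1, 2, 3` would have to miss four different ones.

Every other `n ≥ 2` is a product of four pairwise coprime nontrivial factors, or `ABC` with
`A, B, C` pairwise coprime and `A` not squarefree, or `AB` with `A, B` coprime and neither
squarefree. Reading `ℤ/n` as a product of rings, each case yields `a, b, c, d` with
`ac = bd = 0` and `ab, bc, cd, da ≠ 0`: an induced `C₄` in the complement.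
-/

theorem hasInducedCycle_four {V : Type*} {H : SimpleGraph V} {a b c d : V}
    (hab : H.Adj a b) (hbc : H.Adj b c) (hcd : H.Adj c d) (hda : H.Adj d a)
    (hac : a ≠ c) (hbd : b ≠ d) (hac' : ¬ H.Adj a c) (hbd' : ¬ H.Adj b d) :
    HasInducedCycle H 4 := by
  have hZ : ∀ i : ZMod 4, i = 0 ∨ i = 1 ∨ i = 2 ∨ i = 3 := by decide
  refine ⟨![a, b, c, d], fun i j hij => ?_, fun i j => ?_⟩
  · rcases hZ i with rfl | rfl | rfl | rfl <;> rcases hZ j with rfl | rfl | rfl | rfl <;>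
      simp_all [hab.ne, hbc.ne, hcd.ne, hda.ne, hab.ne.symm, hbc.ne.symm, hcd.ne.symm,
        hda.ne.symm, hac.symm, hbd.symm]
  · rcases hZ i with rfl | rfl | rfl | rfl <;> rcases hZ j with rfl | rfl | rfl | rfl <;>
      simp [hab, hbc, hcd, hda, hab.symm, hbc.symm, hcd.symm, hda.symm, hac', hbd',
        H.adj_comm c a, H.adj_comm d b] <;> decide

section ZeroDivisorGraph

variable {R : Type*} [CommRing R]

theorem compl_zdGraph_adj {x y : nzdSet R} :
    (zdGraph R)ᶜ.Adj x y ↔ x ≠ y ∧ (x : R) * y ≠ 0 := by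
  simp only [SimpleGraph.compl_adj, zdGraph]
  tauto

theorem compl_zdGraph_adj_of_mul {x y : nzdSet R} {w : R} (hxy : (x : R) * y ≠ 0)
    (hxw : (x : R) * w = 0) (hyw : (y : R) * w ≠ 0) : (zdGraph R)ᶜ.Adj x y :=
  compl_zdGraph_adj.2 ⟨by rintro rfl; exact hyw hxw, hxy⟩

theorem not_isCochordal_zdGraph_of_mul_eq_zero {a b c d : R} (hac : a * c = 0) (hbd : b * d = 0)
    (hab : a * b ≠ 0) (hbc : b * c ≠ 0) (hcd : c * d ≠ 0) (hda : d * a ≠ 0)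
    (hac' : a ≠ c) (hbd' : b ≠ d) : ¬ IsCochordal (zdGraph R) := by
  let a' : nzdSet R := ⟨a, left_ne_zero_of_mul hab, c, right_ne_zero_of_mul hbc, hac⟩
  let b' : nzdSet R := ⟨b, left_ne_zero_of_mul hbc, d, right_ne_zero_of_mul hcd, hbd⟩
  let c' : nzdSet R := ⟨c, left_ne_zero_of_mul hcd, a, right_ne_zero_of_mul hda,
    by rwa [mul_comm]⟩
  let d' : nzdSet R := ⟨d, left_ne_zero_of_mul hda, b, right_ne_zero_of_mul hab,
    by rwa [mul_comm]⟩
  refine fun h => h 4 le_rfl (hasInducedCycle_four (a := a') (b := b') (c := c')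
    (d := d') ?_ ?_ ?_ ?_ ?_ ?_ ?_ ?_)
  · exact compl_zdGraph_adj_of_mul hab hac hbc
  · exact compl_zdGraph_adj_of_mul hbc hbd hcd
  · exact compl_zdGraph_adj_of_mul hcd (by rwa [mul_comm]) hda
  · exact compl_zdGraph_adj_of_mul hda (by rwa [mul_comm]) hab
  · exact fun h => hac' (congrArg Subtype.val h)
  · exact fun h => hbd' (congrArg Subtype.val h)
  · exact fun h => (compl_zdGraph_adj.1 h).2 hac
  · exact fun h => (compl_zdGraph_adj.1 h).2 hbd

theorem exists_seq_of_hasInducedCycle_compl_zdGraph {m : ℕ} (hm : 4 ≤ m)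
    (h : HasInducedCycle (zdGraph R)ᶜ m) :
    ∃ x : ZMod m → R, (∀ i, x i * x (i + 1) ≠ 0) ∧ ∀ i, x i * x (i + 2) = 0 := by
  obtain ⟨f, hf, hadj⟩ := h
  have hk (k : ℕ) (hk0 : 0 < k) (hkm : k < m) : (k : ZMod m) ≠ 0 := fun h0 =>
    absurd (Nat.le_of_dvd hk0 ((ZMod.natCast_eq_zero_iff k m).1 h0)) (by omega)
  have h1 : (1 : ZMod m) ≠ 0 := by exact_mod_cast hk 1 (by omega) (by omega)
  have h2 : (2 : ZMod m) ≠ 0 := by exact_mod_cast hk 2 (by omega) (by omega)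
  have h3 : (3 : ZMod m) ≠ 0 := by exact_mod_cast hk 3 (by omega) (by omega)
  refine ⟨fun i => f i, fun i => (compl_zdGraph_adj.1 ((hadj i (i + 1)).2 (.inl rfl))).2,
    fun i => ?_⟩
  by_contra hne
  have hij : f i ≠ f (i + 2) := hf.ne fun h => h2 (by linear_combination -h)
  rcases (hadj i (i + 2)).1 (compl_zdGraph_adj.2 ⟨hij, hne⟩) with h | h
  · exact h1 (by linear_combination h)
  · exact h3 (by linear_combination -h)

end ZeroDivisorGraph

theorem natCast_mul_natCast_eq_zero_iff {n x y : ℕ} : (x : ZMod n) * y = 0 ↔ n ∣ x * y := by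
  rw [← Nat.cast_mul, ZMod.natCast_eq_zero_iff]

theorem isCochordal_zdGraph_zmod_of_forall_exists_dvd {n : ℕ} (hn : n ≠ 0)
    (h : ∀ (m : ℕ) [NeZero m] (y : ZMod m → ℕ), (∀ i, n ∣ y i * y (i + 2)) →
      ∃ i, n ∣ y i * y (i + 1)) :
    IsCochordal (zdGraph (ZMod n)) := by
  have : NeZero n := ⟨hn⟩
  intro m hm hcyc
  have : NeZero m := ⟨by omega⟩
  have hval (a b : ZMod n) : a * b = 0 ↔ n ∣ a.val * b.val := by
    rw [← natCast_mul_natCast_eq_zero_iff, ZMod.natCast_zmod_val, ZMod.natCast_zmod_val]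
  obtain ⟨x, hcons, hskip⟩ := exists_seq_of_hasInducedCycle_compl_zdGraph hm hcyc
  obtain ⟨i, hi⟩ := h m (fun i => (x i).val) fun i => (hval _ _).1 (hskip i)
  exact hcons i ((hval _ _).2 hi)

theorem exists_forall_pow_dvd_mul {α ι : Type*} [CommMonoidWithZero α] [IsCancelMulZero α]
    [Finite ι] [Nonempty ι] {p : α} (hp : Prime p) {a : ℕ} {y : ι → α} (σ : ι → ι)
    (hy : ∀ i, p ^ a ∣ y i * y (σ i)) : ∃ k, ∀ j, p ^ a ∣ y j * y k := by
  obtain ⟨i, hi⟩ := Finite.exists_min (fun j => emultiplicity p (y j))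
  refine ⟨σ i, fun j => ?_⟩
  have := hy i
  rw [pow_dvd_iff_le_emultiplicity, emultiplicity_mul hp] at this ⊢
  exact this.trans (by gcongr; exact hi j)

section CyclicSequences

variable {m : ℕ} {p q r : ℕ}

theorem exists_dvd_mul_succ_of_prime_pow [NeZero m] (hp : p.Prime) (a : ℕ) (y : ZMod m → ℕ)
    (hy : ∀ i, p ^ a ∣ y i * y (i + 2)) : ∃ i, p ^ a ∣ y i * y (i + 1) := by
  obtain ⟨k, hk⟩ := exists_forall_pow_dvd_mul hp.prime (· + 2) hy
  exact ⟨k - 1, by simpa using hk (k - 1)⟩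

theorem exists_dvd_mul_succ_of_prime_pow_mul_prime [NeZero m] (hp : p.Prime) (hq : q.Prime)
    (hpq : p ≠ q) (a : ℕ) (y : ZMod m → ℕ) (hy : ∀ i, p ^ a * q ∣ y i * y (i + 2)) :
    ∃ i, p ^ a * q ∣ y i * y (i + 1) := by
  have hcop : (p ^ a).Coprime q := by simpa using Nat.coprime_pow_primes a 1 hp hq hpq
  obtain ⟨k, hk⟩ := exists_forall_pow_dvd_mul hp.prime (· + 2)
    fun i => (dvd_mul_right _ _).trans (hy i)
  have hq' : q ∣ y (k - 1) * y (k + 1) := by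
    simpa [show k - 1 + 2 = k + 1 by ring] using (dvd_mul_left _ _).trans (hy (k - 1))
  rcases hq.dvd_mul.1 hq' with h | h
  · exact ⟨k - 1, by simpa using hcop.mul_dvd_of_dvd_of_dvd (hk (k - 1)) (h.mul_right _)⟩
  · exact ⟨k, by simpa [mul_comm] using hcop.mul_dvd_of_dvd_of_dvd (hk (k + 1)) (h.mul_right _)⟩

theorem exists_dvd_mul_succ_of_prime_mul_prime_mul_prime (hp : p.Prime) (hq : q.Prime)
    (hr : r.Prime) (hpq : p ≠ q) (hpr : p ≠ r) (hqr : q ≠ r) (y : ZMod m → ℕ)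
    (hy : ∀ i, p * q * r ∣ y i * y (i + 2)) : ∃ i, p * q * r ∣ y i * y (i + 1) := by
  by_contra! h
  have hprime : ∀ P, P = p ∨ P = q ∨ P = r → P.Prime ∧ P ∣ p * q * r := by
    rintro P (rfl | rfl | rfl)
    exacts [⟨hp, (dvd_mul_right _ _).mul_right _⟩, ⟨hq, (dvd_mul_left _ _).mul_right _⟩,
      ⟨hr, dvd_mul_left _ _⟩]
  have hmiss : ∀ i, ∃ P, (P = p ∨ P = q ∨ P = r) ∧ ¬ P ∣ y i ∧ ¬ P ∣ y (i + 1) := by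
    intro i
    by_contra! hc
    have hdvd : ∀ P, P = p ∨ P = q ∨ P = r → P ∣ y i * y (i + 1) := fun P hP =>
      (em (P ∣ y i)).elim (·.mul_right _) fun hi => (hc P hP hi).mul_left _
    exact h i <| (Nat.Coprime.mul_left ((Nat.coprime_primes hp hr).2 hpr)
      ((Nat.coprime_primes hq hr).2 hqr)).mul_dvd_of_dvd_of_dvd
      (((Nat.coprime_primes hp hq).2 hpq).mul_dvd_of_dvd_of_dvd (hdvd p (by simp))
        (hdvd q (by simp))) (hdvd r (by simp))
  choose P hP hPl hPr using hmiss
  -- a prime factor of the modulus divides every entry or the entry two steps further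
  have hsep : ∀ u v i j, j = i + 2 → ¬ P u ∣ y i → ¬ P v ∣ y j → P u ≠ P v := by
    rintro u v i j rfl hi hj huv
    rw [← huv] at hj
    exact ((hprime _ (hP u)).1.dvd_mul.1 ((hprime _ (hP u)).2.trans (hy i))).elim hi hj
  have h01 := hsep 0 1 0 (1 + 1) (by ring) (hPl 0) (hPr 1)
  have h12 := hsep 1 2 1 (2 + 1) (by ring) (hPl 1) (hPr 2)
  have h23 := hsep 2 3 2 (3 + 1) (by ring) (hPl 2) (hPr 3)
  have h02 := hsep 0 2 (0 + 1) (2 + 1) (by ring) (hPr 0) (hPr 2)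
  have h13 := hsep 1 3 (1 + 1) (3 + 1) (by ring) (hPr 1) (hPr 3)
  have h03 := hsep 0 3 (0 + 1) 3 (by ring) (hPr 0) (hPl 3)
  have := hP 0; have := hP 1; have := hP 2; have := hP 3
  omega

end CyclicSequences

theorem not_dvd_of_coprime {n A w : ℕ} (hAn : A ∣ n) (hA : 1 < A) (hw : A.Coprime w) :
    ¬ n ∣ w :=
  fun h => hA.ne' (hw.eq_one_of_dvd (hAn.trans h))

theorem not_dvd_mul_of_coprime {n A e w : ℕ} (hAn : A ∣ n) (he : ¬ A ∣ e) (hw : A.Coprime w) :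
    ¬ n ∣ e * w :=
  fun h => he (hw.dvd_of_dvd_mul_right (hAn.trans h))

theorem not_modEq_of_dvd {n d x y : ℕ} (hd : d ∣ n) (hx : d ∣ x) (hy : ¬ d ∣ y) :
    ¬ x ≡ y [MOD n] :=
  fun h => hy ((h.dvd_iff hd).1 hx)

theorem not_isCochordal_zdGraph_zmod_of_dvd {n a b c d : ℕ} (hac : n ∣ a * c) (hbd : n ∣ b * d)
    (hab : ¬ n ∣ a * b) (hbc : ¬ n ∣ b * c) (hcd : ¬ n ∣ c * d) (hda : ¬ n ∣ d * a)
    (hac' : ¬ a ≡ c [MOD n]) (hbd' : ¬ b ≡ d [MOD n]) :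
    ¬ IsCochordal (zdGraph (ZMod n)) := by
  simp only [← natCast_mul_natCast_eq_zero_iff, ← ZMod.natCast_eq_natCast_iff] at *
  exact not_isCochordal_zdGraph_of_mul_eq_zero hac hbd hab hbc hcd hda hac' hbd'

theorem exists_dvd_mul_self_of_not_squarefree {A : ℕ} (hA : A ≠ 0) (h : ¬ Squarefree A) :
    ∃ e, e ∣ A ∧ A ∣ e * e ∧ ¬ A ∣ e := by
  simp only [Squarefree, not_forall] at h
  obtain ⟨x, ⟨k, rfl⟩, hx⟩ := h
  refine ⟨x * k, ⟨x, by ring⟩, ⟨k, by ring⟩, fun hd => hx (Nat.isUnit_iff.2 ?_)⟩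
  have hxk : x * k ≠ 0 := by rintro h; exact hA (by rw [mul_assoc, h, mul_zero])
  rw [mul_assoc, ← one_mul (x * k)] at hd
  exact Nat.dvd_one.1 (Nat.dvd_of_mul_dvd_mul_right (Nat.pos_of_ne_zero hxk)
    (by simpa using hd))

theorem dvd_or_dvd_of_dvd_two_mul {A B e f : ℕ} (hAB : A.Coprime B) (he : A ∣ 2 * e)
    (hf : B ∣ 2 * f) : A ∣ e ∨ B ∣ f := by
  by_cases h2 : 2 ∣ A
  · have hB2 : ¬ 2 ∣ B := fun h => Nat.not_coprime_of_dvd_of_dvd one_lt_two h2 h hAB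
    exact .inr (((Nat.prime_two.coprime_iff_not_dvd).2 hB2).symm.dvd_of_dvd_mul_left hf)
  · exact .inl (((Nat.prime_two.coprime_iff_not_dvd).2 h2).symm.dvd_of_dvd_mul_left he)


theorem not_isCochordal_zdGraph_zmod_mul_of_not_squarefree {A B : ℕ} (hAB : A.Coprime B)
    (hA : ¬ Squarefree A) (hB : ¬ Squarefree B) : ¬ IsCochordal (zdGraph (ZMod (A * B))) := by
  have hA0 : A ≠ 0 := by rintro rfl; exact hB (by simp_all)
  have hB0 : B ≠ 0 := by rintro rfl; exact hA (by simp_all)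
  obtain ⟨e, heA, hAe, he⟩ := exists_dvd_mul_self_of_not_squarefree hA0 hA
  obtain ⟨f, hfB, hBf, hf⟩ := exists_dvd_mul_self_of_not_squarefree hB0 hB
  have hAf : A.Coprime f := hAB.coprime_dvd_right hfB
  have hBe : B.Coprime e := hAB.symm.coprime_dvd_right heA
  have hx : ¬ A * B ∣ e * f * B := by
    rw [mul_assoc]; exact not_dvd_mul_of_coprime (dvd_mul_right A B) he (hAf.mul_right hAB)
  have hx' : ¬ A * B ∣ e * f * A := by
    rw [show e * f * A = f * (e * A) by ring]
    exact not_dvd_mul_of_coprime (dvd_mul_left B A) hf (hBe.mul_right hAB.symm)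
  refine not_isCochordal_zdGraph_of_mul_eq_zero (a := ((e * f : ℕ) : ZMod (A * B))) (b := B)
    (c := -((e * f : ℕ) : ZMod (A * B))) (d := A) ?_ ?_ ?_ ?_ ?_ ?_ ?_ ?_
  · rw [mul_neg, neg_eq_zero, natCast_mul_natCast_eq_zero_iff,
      show e * f * (e * f) = e * e * (f * f) by ring]
    exact mul_dvd_mul hAe hBf
  · exact natCast_mul_natCast_eq_zero_iff.2 (dvd_of_eq (mul_comm A B))
  · exact mt natCast_mul_natCast_eq_zero_iff.1 hx
  · rw [mul_neg, neg_ne_zero, mul_comm (B : ZMod (A * B))]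
    exact mt natCast_mul_natCast_eq_zero_iff.1 hx
  · rw [neg_mul, neg_ne_zero]; exact mt natCast_mul_natCast_eq_zero_iff.1 hx'
  · rw [mul_comm (A : ZMod (A * B))]; exact mt natCast_mul_natCast_eq_zero_iff.1 hx'
  · -- `e * f = -(e * f)` would give `A ∣ 2 * e` and `B ∣ 2 * f`, making both `A` and `B` even
    intro h
    have h2 : ((2 * (e * f) : ℕ) : ZMod (A * B)) = 0 := by
      rw [Nat.cast_mul, Nat.cast_ofNat]; linear_combination h
    rw [ZMod.natCast_eq_zero_iff] at h2
    have hA2 : A ∣ 2 * e := hAf.dvd_of_dvd_mul_right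
      (by simpa only [mul_assoc] using (dvd_mul_right A B).trans h2)
    have hB2 : B ∣ 2 * f := hBe.dvd_of_dvd_mul_right
      (by rw [show 2 * f * e = 2 * (e * f) by ring]; exact (dvd_mul_left B A).trans h2)
    exact (dvd_or_dvd_of_dvd_two_mul hAB hA2 hB2).elim he hf
  · rw [Ne, ZMod.natCast_eq_natCast_iff]
    refine mt Nat.ModEq.symm (not_modEq_of_dvd (dvd_mul_right A B) dvd_rfl fun h => ?_)
    exact hA (by rw [hAB.eq_one_of_dvd h]; exact squarefree_one)

theorem not_isCochordal_zdGraph_zmod_mul_mul_of_not_squarefree {A B C : ℕ} (hAB : A.Coprime B)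
    (hAC : A.Coprime C) (hBC : B.Coprime C) (hA : ¬ Squarefree A) (hB : 1 < B) (hC : 1 < C) :
    ¬ IsCochordal (zdGraph (ZMod (A * B * C))) := by
  have hA0 : A ≠ 0 := by rintro rfl; simp_all
  have hA1 : 1 < A := by
    by_contra h; exact hA (by rw [show A = 1 by omega]; exact squarefree_one)
  obtain ⟨e, heA, hAe, he⟩ := exists_dvd_mul_self_of_not_squarefree hA0 hA
  have hBe : B.Coprime e := hAB.symm.coprime_dvd_right heA
  have hCe : C.Coprime e := hAC.symm.coprime_dvd_right heA
  have hAn : A ∣ A * B * C := (dvd_mul_right A B).mul_right C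
  have hBn : B ∣ A * B * C := (dvd_mul_left B A).mul_right C
  have hCn : C ∣ A * B * C := dvd_mul_left C _
  refine not_isCochordal_zdGraph_zmod_of_dvd (a := e * C) (b := A) (c := e * B) (d := B * C)
    ?_ (mul_assoc A B C).dvd ?_ ?_ ?_ ?_ ?_ ?_
  · rw [show e * C * (e * B) = e * e * (B * C) by ring, mul_assoc]
    exact mul_dvd_mul_right hAe _
  · exact not_dvd_of_coprime hBn hB ((hBe.mul_right hBC).mul_right hAB.symm)
  · exact not_dvd_of_coprime hCn hC (hAC.symm.mul_right (hCe.mul_right hBC.symm))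
  · rw [show e * B * (B * C) = e * (B * (B * C)) by ring]
    exact not_dvd_mul_of_coprime hAn he (hAB.mul_right (hAB.mul_right hAC))
  · rw [show B * C * (e * C) = e * (B * C * C) by ring]
    exact not_dvd_mul_of_coprime hAn he ((hAB.mul_right hAC).mul_right hAC)
  · exact mt Nat.ModEq.symm (not_modEq_of_dvd hBn (dvd_mul_left B e)
      (not_dvd_of_coprime dvd_rfl hB (hBe.mul_right hBC)))
  · exact not_modEq_of_dvd hAn dvd_rfl (not_dvd_of_coprime dvd_rfl hA1 (hAB.mul_right hAC))

theorem not_isCochordal_zdGraph_zmod_mul_mul_mul {A B C D : ℕ} (hAB : A.Coprime B)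
    (hAC : A.Coprime C) (hAD : A.Coprime D) (hBC : B.Coprime C) (hBD : B.Coprime D)
    (hCD : C.Coprime D) (hA : 1 < A) (hB : 1 < B) (hC : 1 < C) (hD : 1 < D) :
    ¬ IsCochordal (zdGraph (ZMod (A * B * C * D))) := by
  refine not_isCochordal_zdGraph_zmod_of_dvd (a := A * B) (b := A * C) (c := C * D) (d := B * D)
    (dvd_of_eq (by ring)) (dvd_of_eq (by ring)) ?_ ?_ ?_ ?_ ?_ ?_
  · exact not_dvd_of_coprime (dvd_mul_left D _) hD
      ((hAD.symm.mul_right hBD.symm).mul_right (hAD.symm.mul_right hCD.symm))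
  · exact not_dvd_of_coprime ⟨A * C * D, by ring⟩ hB
      ((hAB.symm.mul_right hBC).mul_right (hBC.mul_right hBD))
  · exact not_dvd_of_coprime ⟨B * C * D, by ring⟩ hA
      ((hAC.mul_right hAD).mul_right (hAB.mul_right hAD))
  · exact not_dvd_of_coprime ⟨A * B * D, by ring⟩ hC
      ((hBC.symm.mul_right hCD).mul_right (hAC.symm.mul_right hBC.symm))
  · exact not_modEq_of_dvd ⟨B * C * D, by ring⟩ (dvd_mul_right A B)
      (not_dvd_of_coprime dvd_rfl hA (hAC.mul_right hAD))
  · exact not_modEq_of_dvd ⟨B * C * D, by ring⟩ (dvd_mul_right A C)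
      (not_dvd_of_coprime dvd_rfl hA (hAB.mul_right hAD))

theorem not_squarefree_prime_pow {p a : ℕ} (hp : p.Prime) (ha : 2 ≤ a) :
    ¬ Squarefree (p ^ a) := by
  rw [Nat.squarefree_pow_iff hp.ne_one (by omega)]
  omega

theorem exists_prime_pow_mul_of_two_le {n : ℕ} (hn : 2 ≤ n) :
    ∃ p a m, p.Prime ∧ 0 < a ∧ 0 < m ∧ ¬ p ∣ m ∧ n = p ^ a * m := by
  have hp := Nat.minFac_prime (show n ≠ 1 by omega)
  obtain ⟨a, m, hpm, hnm⟩ :=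
    Nat.exists_eq_pow_mul_and_not_dvd (n := n) (by omega) n.minFac hp.ne_one
  refine ⟨n.minFac, a, m, hp, Nat.pos_of_ne_zero ?_, Nat.pos_of_ne_zero ?_, hpm, hnm⟩
  · rintro rfl
    exact hpm ((Nat.minFac_dvd n).trans (by rw [hnm]; simp))
  · rintro rfl
    exact hpm (dvd_zero _)

theorem eq_one_of_isCochordal_zdGraph_zmod_pow_mul_pow_mul_pow {p q r a b c : ℕ}
    (hp : p.Prime) (hq : q.Prime) (hr : r.Prime) (hpq : p ≠ q) (hpr : p ≠ r) (hqr : q ≠ r)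
    (ha : 0 < a) (hb : 0 < b) (hc : 0 < c)
    (h : IsCochordal (zdGraph (ZMod (p ^ a * q ^ b * r ^ c)))) :
    a = 1 ∧ b = 1 ∧ c = 1 := by
  have one_lt {s k : ℕ} (hs : s.Prime) (hk : 0 < k) : 1 < s ^ k := Nat.one_lt_pow hk.ne' hs.one_lt
  have hpq' := Nat.coprime_pow_primes a b hp hq hpq
  have hpr' := Nat.coprime_pow_primes a c hp hr hpr
  have hqr' := Nat.coprime_pow_primes b c hq hr hqr
  refine ⟨?_, ?_, ?_⟩ <;> by_contra hne
  · exact not_isCochordal_zdGraph_zmod_mul_mul_of_not_squarefree hpq' hpr' hqr'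
      (not_squarefree_prime_pow hp (by omega)) (one_lt hq hb) (one_lt hr hc) h
  · rw [show p ^ a * q ^ b * r ^ c = q ^ b * p ^ a * r ^ c by ring] at h
    exact not_isCochordal_zdGraph_zmod_mul_mul_of_not_squarefree hpq'.symm hqr' hpr'
      (not_squarefree_prime_pow hq (by omega)) (one_lt hp ha) (one_lt hr hc) h
  · rw [show p ^ a * q ^ b * r ^ c = r ^ c * p ^ a * q ^ b by ring] at h
    exact not_isCochordal_zdGraph_zmod_mul_mul_of_not_squarefree hpr'.symm hqr'.symm hpq'
      (not_squarefree_prime_pow hr (by omega)) (one_lt hp ha) (one_lt hq hb) h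

theorem not_isCochordal_zdGraph_zmod_pow_mul_pow_mul_pow_mul {p q r a b c l : ℕ}
    (hp : p.Prime) (hq : q.Prime) (hr : r.Prime) (hpq : p ≠ q) (hpr : p ≠ r) (hqr : q ≠ r)
    (ha : 0 < a) (hb : 0 < b) (hc : 0 < c) (hpl : ¬ p ∣ l) (hql : ¬ q ∣ l) (hrl : ¬ r ∣ l)
    (hl : 2 ≤ l) : ¬ IsCochordal (zdGraph (ZMod (p ^ a * q ^ b * r ^ c * l))) := by
  have one_lt {s k : ℕ} (hs : s.Prime) (hk : 0 < k) : 1 < s ^ k := Nat.one_lt_pow hk.ne' hs.one_lt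
  have coprime_l {s k : ℕ} (hs : s.Prime) (hsl : ¬ s ∣ l) : (s ^ k).Coprime l :=
    (hs.coprime_iff_not_dvd.2 hsl).pow_left k
  exact not_isCochordal_zdGraph_zmod_mul_mul_mul (Nat.coprime_pow_primes a b hp hq hpq)
    (Nat.coprime_pow_primes a c hp hr hpr) (coprime_l hp hpl) (Nat.coprime_pow_primes b c hq hr hqr)
    (coprime_l hq hql) (coprime_l hr hrl) (one_lt hp ha) (one_lt hq hb) (one_lt hr hc) hl

theorem exists_eq_of_isCochordal_zdGraph_zmod {n : ℕ} (hn : 2 ≤ n)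
    (h : IsCochordal (zdGraph (ZMod n))) :
    (∃ p a : ℕ, p.Prime ∧ 1 ≤ a ∧ n = p ^ a) ∨
      (∃ p q a : ℕ, p.Prime ∧ q.Prime ∧ p ≠ q ∧ 1 ≤ a ∧ n = p ^ a * q) ∨
      (∃ p q r : ℕ, p.Prime ∧ q.Prime ∧ r.Prime ∧ p ≠ q ∧ p ≠ r ∧ q ≠ r ∧ n = p * q * r) := by
  obtain ⟨p, a, m, hp, ha, hm0, hpm, rfl⟩ := exists_prime_pow_mul_of_two_le hn
  obtain rfl | hm : m = 1 ∨ 2 ≤ m := by omega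
  · exact .inl ⟨p, a, hp, ha, mul_one _⟩
  obtain ⟨q, b, k, hq, hb, hk0, hqk, rfl⟩ := exists_prime_pow_mul_of_two_le hm
  have hpq : p ≠ q := by rintro rfl; exact hpm (dvd_mul_of_dvd_left (dvd_pow_self p hb.ne') k)
  have hpk : ¬ p ∣ k := fun h => hpm (dvd_mul_of_dvd_right h _)
  obtain rfl | hk : k = 1 ∨ 2 ≤ k := by omega
  · rw [mul_one] at h
    obtain rfl | rfl | ⟨ha2, hb2⟩ : a = 1 ∨ b = 1 ∨ (2 ≤ a ∧ 2 ≤ b) := by omega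
    · exact .inr (.inl ⟨q, p, b, hq, hp, hpq.symm, hb, by ring⟩)
    · exact .inr (.inl ⟨p, q, a, hp, hq, hpq, ha, by ring⟩)
    · exact absurd h (not_isCochordal_zdGraph_zmod_mul_of_not_squarefree
        (Nat.coprime_pow_primes a b hp hq hpq) (not_squarefree_prime_pow hp ha2)
        (not_squarefree_prime_pow hq hb2))
  obtain ⟨r, c, l, hr, hc, hl0, hrl, rfl⟩ := exists_prime_pow_mul_of_two_le hk
  have hpr : p ≠ r := by rintro rfl; exact hpk (dvd_mul_of_dvd_left (dvd_pow_self p hc.ne') l)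
  have hqr : q ≠ r := by rintro rfl; exact hqk (dvd_mul_of_dvd_left (dvd_pow_self q hc.ne') l)
  rw [← mul_assoc, ← mul_assoc] at h
  obtain rfl | hl : l = 1 ∨ 2 ≤ l := by omega
  · rw [mul_one] at h
    obtain ⟨rfl, rfl, rfl⟩ :=
      eq_one_of_isCochordal_zdGraph_zmod_pow_mul_pow_mul_pow hp hq hr hpq hpr hqr ha hb hc h
    exact .inr (.inr ⟨p, q, r, hp, hq, hr, hpq, hpr, hqr, by ring⟩)
  exact absurd h (not_isCochordal_zdGraph_zmod_pow_mul_pow_mul_pow_mul hp hq hr hpq hpr hqr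
    ha hb hc (fun h => hpk (h.mul_left _)) (fun h => hqk (h.mul_left _)) hrl hl)

/-- For `n ≥ 2`, the zero-divisor graph `Γ(ℤ/nℤ)` is cochordal
iff `n = p^a`, `n = p^a·q`, or `n = p·q·r` with `p, q, r` distinct primes and `a ≥ 1`. -/
theorem zdGraph_zmod_cochordal_iff (n : ℕ) (hn : 2 ≤ n) :
    IsCochordal (zdGraph (ZMod n)) ↔
      ((∃ p a : ℕ, p.Prime ∧ 1 ≤ a ∧ n = p ^ a) ∨
       (∃ p q a : ℕ, p.Prime ∧ q.Prime ∧ p ≠ q ∧ 1 ≤ a ∧ n = p ^ a * q) ∨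
       (∃ p q r : ℕ, p.Prime ∧ q.Prime ∧ r.Prime ∧ p ≠ q ∧ p ≠ r ∧ q ≠ r ∧
          n = p * q * r)) := by
  refine ⟨exists_eq_of_isCochordal_zdGraph_zmod hn, ?_⟩
  rintro (⟨p, a, hp, -, rfl⟩ | ⟨p, q, a, hp, hq, hpq, -, rfl⟩ |
    ⟨p, q, r, hp, hq, hr, hpq, hpr, hqr, rfl⟩)
  · exact isCochordal_zdGraph_zmod_of_forall_exists_dvd (pow_ne_zero a hp.ne_zero)
      fun _ _ => exists_dvd_mul_succ_of_prime_pow hp a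
  · exact isCochordal_zdGraph_zmod_of_forall_exists_dvd
      (mul_ne_zero (pow_ne_zero a hp.ne_zero) hq.ne_zero)
      fun _ _ => exists_dvd_mul_succ_of_prime_pow_mul_prime hp hq hpq a
  · exact isCochordal_zdGraph_zmod_of_forall_exists_dvd
      (by simp [hp.ne_zero, hq.ne_zero, hr.ne_zero])
      fun _ _ => exists_dvd_mul_succ_of_prime_mul_prime_mul_prime hp hq hr hpq hpr hqr
end

section
/- Let n = p^a·q^b·r^c where p, q, r are distinct primes, a, b, c ≥ 1, and at least one of a, b, c is larger than one. Then the zero-divisor graph Γ(ℤ/nℤ) is not cochordal; indeed it contains an induced matching of size two. -/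
/-- An induced matching of size two: four distinct vertices `a, b, c, d` such that
`{a,b}` and `{c,d}` are edges while none of `{a,c}, {a,d}, {b,c}, {b,d}` is an edge. -/
def HasInducedMatchingTwo {V : Type*} (G : SimpleGraph V) : Prop :=
  ∃ a b c d : V, a ≠ b ∧ a ≠ c ∧ a ≠ d ∧ b ≠ c ∧ b ≠ d ∧ c ≠ d ∧
    G.Adj a b ∧ G.Adj c d ∧ ¬ G.Adj a c ∧ ¬ G.Adj a d ∧ ¬ G.Adj b c ∧ ¬ G.Adj b d

/-! If `p ^ 2 ∣ n`, the edges `{q^b r^c, p^a}` and `{p q^b, p^(a-1) r^c}` of `Γ(ℤ/nℤ)` form an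
induced matching: a monomial `p^i q^j r^k` vanishes modulo `n` exactly when
`(i, j, k) ≥ (a, b, c)` componentwise, which holds for both edges, while each of the four cross
products, and the squares of `q^b r^c` and `p q^b`, falls short in one exponent. The complement
of an induced matching of size two contains an induced 4-cycle, so `Γ(ℤ/nℤ)` is not cochordal. -/

theorem Nat.Coprime.pow_dvd_pow_mul_iff {p s : ℕ} (hs : p.Coprime s) (hp : 1 < p) (a i : ℕ) :
    p ^ a ∣ p ^ i * s ↔ a ≤ i := by
  rw [(hs.pow_left a).dvd_mul_right, Nat.pow_dvd_pow_iff_le_right hp]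

theorem Nat.Prime.coprime_pow_mul_pow {p q r : ℕ} (hp : p.Prime) (hq : q.Prime) (hr : r.Prime)
    (hpq : p ≠ q) (hpr : p ≠ r) (j k : ℕ) : p.Coprime (q ^ j * r ^ k) :=
  (((Nat.coprime_primes hp hq).2 hpq).pow_right j).mul_right
    (((Nat.coprime_primes hp hr).2 hpr).pow_right k)

theorem pow_mul_pow_mul_pow_dvd_iff {p q r : ℕ} (hp : p.Prime) (hq : q.Prime) (hr : r.Prime)
    (hpq : p ≠ q) (hpr : p ≠ r) (hqr : q ≠ r) (a b c i j k : ℕ) :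
    p ^ a * q ^ b * r ^ c ∣ p ^ i * q ^ j * r ^ k ↔ a ≤ i ∧ b ≤ j ∧ c ≤ k := by
  constructor
  · intro h
    have dvd_of_factor {d e : ℕ} (hd : d ∣ p ^ a * q ^ b * r ^ c)
        (he : p ^ i * q ^ j * r ^ k = e) : d ∣ e := he ▸ hd.trans h
    refine ⟨?_, ?_, ?_⟩
    · refine ((hp.coprime_pow_mul_pow hq hr hpq hpr j k).pow_dvd_pow_mul_iff hp.one_lt a i).1 ?_
      exact dvd_of_factor (Dvd.intro (q ^ b * r ^ c) (by ring)) (by ring)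
    · refine ((hq.coprime_pow_mul_pow hp hr hpq.symm hqr i k).pow_dvd_pow_mul_iff
        hq.one_lt b j).1 ?_
      exact dvd_of_factor (Dvd.intro (p ^ a * r ^ c) (by ring)) (by ring)
    · refine ((hr.coprime_pow_mul_pow hp hq hpr.symm hqr.symm i j).pow_dvd_pow_mul_iff
        hr.one_lt c k).1 ?_
      exact dvd_of_factor (Dvd.intro (p ^ a * q ^ b) (by ring)) (by ring)
  · rintro ⟨hi, hj, hk⟩
    exact mul_dvd_mul (mul_dvd_mul (pow_dvd_pow p hi) (pow_dvd_pow q hj)) (pow_dvd_pow r hk)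

theorem ZMod.pow_mul_pow_mul_pow_eq_zero_iff {p q r : ℕ} (hp : p.Prime) (hq : q.Prime)
    (hr : r.Prime) (hpq : p ≠ q) (hpr : p ≠ r) (hqr : q ≠ r) (a b c i j k : ℕ) :
    ((p : ZMod (p ^ a * q ^ b * r ^ c)) ^ i * (q : ZMod _) ^ j * (r : ZMod _) ^ k = 0 ↔
      a ≤ i ∧ b ≤ j ∧ c ≤ k) := by
  rw [← pow_mul_pow_mul_pow_dvd_iff hp hq hr hpq hpr hqr, ← ZMod.natCast_eq_zero_iff]
  norm_cast

theorem hasInducedMatchingTwo_zdGraph {R : Type*} [CommRing R] {x y u v : R}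
    (hxy : x * y = 0) (huv : u * v = 0) (hxx : x * x ≠ 0) (huu : u * u ≠ 0)
    (hxu : x * u ≠ 0) (hxv : x * v ≠ 0) (hyu : y * u ≠ 0) (hyv : y * v ≠ 0) :
    HasInducedMatchingTwo (zdGraph R) := by
  refine ⟨⟨x, left_ne_zero_of_mul hxu, y, left_ne_zero_of_mul hyu, hxy⟩,
    ⟨y, left_ne_zero_of_mul hyu, x, left_ne_zero_of_mul hxu, by rw [mul_comm, hxy]⟩,
    ⟨u, right_ne_zero_of_mul hxu, v, right_ne_zero_of_mul hxv, huv⟩,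
    ⟨v, right_ne_zero_of_mul hxv, u, right_ne_zero_of_mul hxu, by rw [mul_comm, huv]⟩, ?_⟩
  -- `x * x ≠ 0` gives `x ≠ y`, `u * u ≠ 0` gives `u ≠ v`, and the cross products the rest.
  simp only [zdGraph, ne_eq]
  grind

theorem hasInducedMatchingTwo_zdGraph_zmod {p q r a b c : ℕ} (hp : p.Prime) (hq : q.Prime)
    (hr : r.Prime) (hpq : p ≠ q) (hpr : p ≠ r) (hqr : q ≠ r)
    (ha : 2 ≤ a) (hb : 1 ≤ b) (hc : 1 ≤ c) :
    HasInducedMatchingTwo (zdGraph (ZMod (p ^ a * q ^ b * r ^ c))) := by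
  set m : ℕ → ℕ → ℕ → ZMod (p ^ a * q ^ b * r ^ c) := fun i j k =>
    (p : ZMod (p ^ a * q ^ b * r ^ c)) ^ i * (q : ZMod _) ^ j * (r : ZMod _) ^ k
  have hmul (i j k i' j' k' : ℕ) : m i j k * m i' j' k' = m (i + i') (j + j') (k + k') := by
    simp only [m]; ring
  have hzero (i j k : ℕ) : m i j k = 0 ↔ a ≤ i ∧ b ≤ j ∧ c ≤ k :=
    ZMod.pow_mul_pow_mul_pow_eq_zero_iff hp hq hr hpq hpr hqr a b c i j k
  apply hasInducedMatchingTwo_zdGraph (x := m 0 b c) (y := m a 0 0) (u := m 1 b 0)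
    (v := m (a - 1) 0 c) <;> simp only [ne_eq, hmul, hzero] <;> omega

theorem HasInducedMatchingTwo.compl_hasInducedCycle_four {V : Type*} {G : SimpleGraph V}
    (h : HasInducedMatchingTwo G) : HasInducedCycle Gᶜ 4 := by
  obtain ⟨a, b, c, d, hab, hac, had, hbc, hbd, hcd, hGab, hGcd, hac', had', hbc', hbd'⟩ := h
  -- `ZMod 4` is `Fin 4` by definition; on `Fin 4`, `fin_cases` produces plain numerals.
  show ∃ f : Fin 4 → V, Function.Injective f ∧
    ∀ i j : Fin 4, Gᶜ.Adj (f i) (f j) ↔ (j = i + 1 ∨ i = j + 1)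
  refine ⟨![a, c, b, d], ?_, ?_⟩
  · intro i j h
    fin_cases i <;> fin_cases j <;> simp_all
  · intro i j
    fin_cases i <;> fin_cases j <;> simp_all [SimpleGraph.adj_comm]

theorem HasInducedMatchingTwo.not_isCochordal {V : Type*} {G : SimpleGraph V}
    (h : HasInducedMatchingTwo G) : ¬ IsCochordal G :=
  fun hG => hG 4 le_rfl h.compl_hasInducedCycle_four

/-- If `n = p^a·q^b·r^c` with `p, q, r` distinct primes,
`a, b, c ≥ 1`, and at least one of `a, b, c` larger than one, then `Γ(ℤ/nℤ)` is
not cochordal; indeed it contains an induced matching of size two. -/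
theorem zdGraph_zmod_three_primes_not_cochordal
    (p q r a b c : ℕ) (hp : p.Prime) (hq : q.Prime) (hr : r.Prime)
    (hpq : p ≠ q) (hpr : p ≠ r) (hqr : q ≠ r)
    (ha : 1 ≤ a) (hb : 1 ≤ b) (hc : 1 ≤ c)
    (hone : 2 ≤ a ∨ 2 ≤ b ∨ 2 ≤ c) :
    ¬ IsCochordal (zdGraph (ZMod (p ^ a * q ^ b * r ^ c))) ∧
      HasInducedMatchingTwo (zdGraph (ZMod (p ^ a * q ^ b * r ^ c))) := by
  have h : HasInducedMatchingTwo (zdGraph (ZMod (p ^ a * q ^ b * r ^ c))) := by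
    rcases hone with ha2 | hb2 | hc2
    · exact hasInducedMatchingTwo_zdGraph_zmod hp hq hr hpq hpr hqr ha2 hb hc
    · rw [show p ^ a * q ^ b * r ^ c = q ^ b * p ^ a * r ^ c by ring]
      exact hasInducedMatchingTwo_zdGraph_zmod hq hp hr hpq.symm hqr hpr hb2 ha hc
    · rw [show p ^ a * q ^ b * r ^ c = r ^ c * p ^ a * q ^ b by ring]
      exact hasInducedMatchingTwo_zdGraph_zmod hr hp hq hpr.symm hqr.symm hpq hc2 ha hb
  exact ⟨h.not_isCochordal, h⟩
end

section
/- For all integers q ≥ 2 and L ≥ 2, the layered chain graph C(q,L) is chordal and cochordal: neither C(q,L) nor its complement contains an induced cycle of length at least 4. -/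
/-- Vertex type of the layered chain graph `C(q,L)`: a vertex is a pair `(k, j)`
where `k` is its layer (`1 ≤ k ≤ L-1`) and `j` indexes the `(q-1)·q^(L-k-1)`
vertices of layer `V_k`. -/
abbrev ChainVert (q L : ℕ) :=
  {v : ℕ × ℕ // 1 ≤ v.1 ∧ v.1 ≤ L - 1 ∧ v.2 < (q - 1) * q ^ (L - v.1 - 1)}

/-- The layered chain graph `C(q,L)`: distinct vertices in layers `k` and `ℓ`
are adjacent iff `k + ℓ ≥ L`. -/
def chainGraph (q L : ℕ) : SimpleGraph (ChainVert q L) where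
  Adj x y := x ≠ y ∧ L ≤ x.val.1 + y.val.1
  symm := by
    constructor
    rintro x y ⟨h1, h2⟩
    exact ⟨h1.symm, by omega⟩
  loopless := ⟨fun x h => h.1 rfl⟩

/-!
`C(q,L)` is a threshold graph: distinct vertices are adjacent iff the sum of their layer
indices reaches `L`. The cyclically consecutive vertices `v₀ v₁ v₂ v₃` of an induced cycle of
length at least `4`, in a graph or in its complement, form an alternating four-cycle: `v₀v₁`
and `v₂v₃` lie on one side, `v₀v₂` and `v₁v₃` on the other. In a threshold graph with weights
`w`, the edges force `w v₀ + w v₁ + w v₂ + w v₃ ≥ 2L` and the non-edges force the opposite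
strict inequality.
-/
namespace SimpleGraph

variable {V : Type*}

/-- The four vertices are automatically distinct. -/
def HasAlternatingFourCycle (G : SimpleGraph V) : Prop :=
  ∃ a b c d, G.Adj a b ∧ G.Adj c d ∧ a ≠ c ∧ b ≠ d ∧ ¬G.Adj a c ∧ ¬G.Adj b d

theorem HasAlternatingFourCycle.of_compl {G : SimpleGraph V} (h : HasAlternatingFourCycle Gᶜ) :
    HasAlternatingFourCycle G := by
  obtain ⟨a, b, c, d, hab, hcd, hac, hbd, hnac, hnbd⟩ := h
  rw [compl_adj] at hab hcd hnac hnbd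
  exact ⟨a, c, b, d, not_not.mp fun h => hnac ⟨hac, h⟩, not_not.mp fun h => hnbd ⟨hbd, h⟩,
    hab.1, hcd.1, hab.2, hcd.2⟩

section Threshold

variable {α : Type*} [AddCommMonoid α] [LinearOrder α] [IsOrderedCancelAddMonoid α]

def thresholdGraph (w : V → α) (t : α) : SimpleGraph V where
  Adj x y := x ≠ y ∧ t ≤ w x + w y
  symm := ⟨fun _ _ h => ⟨h.1.symm, add_comm (w _) _ ▸ h.2⟩⟩
  loopless := ⟨fun _ h => h.1 rfl⟩

theorem not_hasAlternatingFourCycle_thresholdGraph (w : V → α) (t : α) :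
    ¬HasAlternatingFourCycle (thresholdGraph w t) := by
  rintro ⟨a, b, c, d, ⟨-, hab⟩, ⟨-, hcd⟩, hac, hbd, hnac, hnbd⟩
  have hac' : w a + w c < t := not_le.mp fun h => hnac ⟨hac, h⟩
  have hbd' : w b + w d < t := not_le.mp fun h => hnbd ⟨hbd, h⟩
  refine lt_irrefl (t + t) ?_
  calc t + t ≤ (w a + w b) + (w c + w d) := add_le_add hab hcd
    _ = (w a + w c) + (w b + w d) := add_add_add_comm _ _ _ _
    _ < t + t := add_lt_add hac' hbd'

end Threshold

end SimpleGraph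

open SimpleGraph

theorem ZMod.natCast_ne_zero_of_pos_of_lt {n k : ℕ} (hk : 0 < k) (hkn : k < n) :
    (k : ZMod n) ≠ 0 := by
  rw [Ne, ZMod.natCast_eq_zero_iff]
  exact fun h => (Nat.le_of_dvd hk h).not_gt hkn

theorem HasInducedCycle.hasAlternatingFourCycle {V : Type*} {G : SimpleGraph V} {n : ℕ}
    (hn : 4 ≤ n) (h : HasInducedCycle G n) : HasAlternatingFourCycle G := by
  obtain ⟨f, hf, hadj⟩ := h
  have h1 : (1 : ZMod n) ≠ 0 := by
    exact_mod_cast ZMod.natCast_ne_zero_of_pos_of_lt one_pos (by omega)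
  have h2 : (2 : ZMod n) ≠ 0 := by
    exact_mod_cast ZMod.natCast_ne_zero_of_pos_of_lt two_pos (by omega)
  have h3 : (3 : ZMod n) ≠ 0 := by
    exact_mod_cast ZMod.natCast_ne_zero_of_pos_of_lt three_pos (by omega)
  refine ⟨f 0, f 1, f 2, f 3, (hadj 0 1).2 (by simp), (hadj 2 3).2 (by norm_num),
    fun h => h2 (by linear_combination (hf h).symm),
    fun h => h2 (by linear_combination (hf h).symm), ?_, ?_⟩
  · rw [hadj]
    rintro (h | h)
    exacts [h1 (by linear_combination h), h3 (by linear_combination -h)]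
  · rw [hadj]
    rintro (h | h)
    exacts [h1 (by linear_combination h), h3 (by linear_combination -h)]

theorem IsChordal.of_not_hasAlternatingFourCycle {V : Type*} {G : SimpleGraph V}
    (h : ¬HasAlternatingFourCycle G) : IsChordal G :=
  fun _ hn hcyc => h (hcyc.hasAlternatingFourCycle hn)

theorem IsCochordal.of_not_hasAlternatingFourCycle {V : Type*} {G : SimpleGraph V}
    (h : ¬HasAlternatingFourCycle G) : IsCochordal G :=
  IsChordal.of_not_hasAlternatingFourCycle fun h' => h h'.of_compl

theorem chainGraph_eq_thresholdGraph (q L : ℕ) :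
    chainGraph q L = thresholdGraph (fun v : ChainVert q L => v.val.1) L :=
  rfl

theorem chainGraph_chordal_and_cochordal_general (q L : ℕ) :
    IsChordal (chainGraph q L) ∧ IsCochordal (chainGraph q L) := by
  have h := chainGraph_eq_thresholdGraph q L ▸ not_hasAlternatingFourCycle_thresholdGraph _ _
  exact ⟨.of_not_hasAlternatingFourCycle h, .of_not_hasAlternatingFourCycle h⟩

/-- For all `q ≥ 2` and `L ≥ 2`, the layered chain graph
`C(q,L)` is chordal and cochordal: neither it nor its complement has an induced
cycle of length at least `4`. -/
theorem chainGraph_chordal_and_cochordal (q L : ℕ) (hq : 2 ≤ q) (hL : 2 ≤ L) :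
    IsChordal (chainGraph q L) ∧ IsCochordal (chainGraph q L) :=
  chainGraph_chordal_and_cochordal_general q L
end

section
/- For every prime p and every integer c ≥ 2, the zero-divisor graph of 𝔽_p[x]/(x^c) is isomorphic, as a simple graph, to the zero-divisor graph of ℤ/p^cℤ: there is a bijection Ψ between the nonzero zero-divisors of 𝔽_p[x]/(x^c) and those of ℤ/p^cℤ such that for distinct f, g one has f·g = 0 if and only if Ψ(f)·Ψ(g) = 0. -/
/-- The truncated polynomial ring `R_{p,c} = 𝔽_p[x]/(x^c)`. -/
abbrev truncR (p c : ℕ) : Type :=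
  Polynomial (ZMod p) ⧸ Ideal.span {(Polynomial.X : Polynomial (ZMod p)) ^ c}

/-!
Both rings are quotients of a domain by the `c`-th power of a prime (`X` in `𝔽_p[X]`, `p` in `ℤ`),
so in either ring `x * y = 0` iff the image `t` of that prime satisfies `t ^ j ∣ x` and `t ^ k ∣ y`
for some `j + k = c`. Every element has `c` digits in `𝔽_p` (coefficients of `X ^ i`, resp.
base-`p` digits), and `t ^ k ∣ x` iff the first `k` digits of `x` vanish. Matching digits is
therefore a bijection of the rings which preserves and reflects `x * y = 0`, and such a bijection
restricts to the nonzero zero-divisors.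
-/

open Polynomial

theorem Prime.exists_pow_dvd_and_pow_dvd_of_pow_dvd_mul {α : Type*} [CommMonoidWithZero α]
    [IsCancelMulZero α] {q : α} (hq : Prime q) {n : ℕ} {a b : α} (h : q ^ n ∣ a * b) :
    ∃ i j, i + j = n ∧ q ^ i ∣ a ∧ q ^ j ∣ b := by
  induction n generalizing a with
  | zero => exact ⟨0, 0, rfl, by simp, by simp⟩
  | succ n ih =>
    by_cases ha : q ∣ a
    · obtain ⟨a', rfl⟩ := ha
      rw [pow_succ', mul_assoc] at h
      obtain ⟨i, j, hij, ha', hb⟩ := ih ((mul_dvd_mul_iff_left hq.ne_zero).mp h)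
      exact ⟨i + 1, j, by omega, by rw [pow_succ']; exact mul_dvd_mul_left q ha', hb⟩
    · exact ⟨0, n + 1, by omega, by simp, hq.pow_dvd_of_dvd_mul_left _ ha h⟩

theorem Nat.pow_dvd_iff_forall_dvd_div_pow {p n k : ℕ} :
    p ^ k ∣ n ↔ ∀ i < k, p ∣ n / p ^ i := by
  induction k with
  | zero => simp
  | succ k ih =>
    have hsucc : p ^ (k + 1) ∣ n ↔ p ^ k ∣ n ∧ p ∣ n / p ^ k :=
      ⟨fun h => ⟨(pow_dvd_pow p k.le_succ).trans h, (Nat.dvd_div_iff_mul_dvd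
          ((pow_dvd_pow p k.le_succ).trans h)).mpr (pow_succ p k ▸ h)⟩,
        fun ⟨hk, hdiv⟩ => pow_succ p k ▸ (Nat.dvd_div_iff_mul_dvd hk).mp hdiv⟩
    rw [hsucc, ih, Nat.forall_lt_succ_right]

section PrimePowQuotient

variable {A R : Type*} [CommRing A] [CommRing R] {π : A →+* R} {q : A} {c : ℕ}

theorem pow_dvd_map_iff_of_ker (hπ : Function.Surjective π) (hker : ∀ a, π a = 0 ↔ q ^ c ∣ a)
    {j : ℕ} (hj : j ≤ c) (a : A) : π q ^ j ∣ π a ↔ q ^ j ∣ a := by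
  refine ⟨fun ⟨y, hy⟩ => ?_, fun h => map_pow π q j ▸ map_dvd π h⟩
  obtain ⟨b, rfl⟩ := hπ y
  have hc : q ^ c ∣ a - q ^ j * b := (hker _).mp (by rw [map_sub, map_mul, map_pow, hy, sub_self])
  exact (dvd_sub_left (dvd_mul_right _ b)).mp ((pow_dvd_pow q hj).trans hc)

theorem mul_eq_zero_iff_exists_pow_dvd_of_ker [IsDomain A] (hπ : Function.Surjective π)
    (hker : ∀ a, π a = 0 ↔ q ^ c ∣ a) (hq : Prime q) (x y : R) :
    x * y = 0 ↔ ∃ j k, j + k = c ∧ π q ^ j ∣ x ∧ π q ^ k ∣ y := by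
  obtain ⟨a, rfl⟩ := hπ x
  obtain ⟨b, rfl⟩ := hπ y
  constructor
  · intro h
    obtain ⟨j, k, hjk, ha, hb⟩ :=
      hq.exists_pow_dvd_and_pow_dvd_of_pow_dvd_mul ((hker _).mp (by rwa [map_mul]))
    exact ⟨j, k, hjk, (pow_dvd_map_iff_of_ker hπ hker (by omega) a).mpr ha,
      (pow_dvd_map_iff_of_ker hπ hker (by omega) b).mpr hb⟩
  · rintro ⟨j, k, rfl, ha, hb⟩
    have hqc : π q ^ (j + k) = 0 := by rw [← map_pow, hker]
    simpa [← pow_add, hqc] using mul_dvd_mul ha hb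

end PrimePowQuotient

theorem mul_eq_zero_iff_of_pow_dvd_iff {R S : Type*} [MonoidWithZero R] [MonoidWithZero S]
    {t : R} {s : S} {c : ℕ}
    (hR : ∀ x y : R, x * y = 0 ↔ ∃ j k, j + k = c ∧ t ^ j ∣ x ∧ t ^ k ∣ y)
    (hS : ∀ x y : S, x * y = 0 ↔ ∃ j k, j + k = c ∧ s ^ j ∣ x ∧ s ^ k ∣ y)
    {Φ : R → S} (hΦ : ∀ k ≤ c, ∀ x, t ^ k ∣ x ↔ s ^ k ∣ Φ x) (x y : R) :
    x * y = 0 ↔ Φ x * Φ y = 0 := by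
  rw [hR, hS]
  exact exists₂_congr fun j k => and_congr_right fun hjk =>
    and_congr (hΦ j (by omega) x) (hΦ k (by omega) y)

def nzdSetCongr {R S : Type*} [CommRing R] [CommRing S] (Φ : R ≃ S)
    (hΦ : ∀ x y, x * y = 0 ↔ Φ x * Φ y = 0) : nzdSet R ≃ nzdSet S :=
  Φ.subtypeEquiv fun x => by
    have hΦ0 : Φ 0 = 0 := by simpa using (hΦ 0 (Φ.symm 1)).mp (zero_mul _)
    have hne : ∀ y, Φ y ≠ 0 ↔ y ≠ 0 := fun y => by rw [← hΦ0, Φ.injective.ne_iff]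
    simp only [nzdSet, Set.mem_ofPred_eq, Φ.surjective.exists, hne, hΦ]

namespace AdjoinRoot

variable {K : Type*} [CommRing K] {c : ℕ}

theorem mul_eq_zero_iff_exists_root_pow_dvd [IsDomain K] (x y : AdjoinRoot (X ^ c : K[X])) :
    x * y = 0 ↔ ∃ j k, j + k = c ∧ root (X ^ c) ^ j ∣ x ∧ root (X ^ c) ^ k ∣ y := by
  simpa only [mk_X] using
    mul_eq_zero_iff_exists_pow_dvd_of_ker mk_surjective (fun _ => mk_eq_zero) prime_X x y

variable [Nontrivial K]

variable (c) in
noncomputable def coeffEquivXPow : AdjoinRoot (X ^ c : K[X]) ≃ (Fin c → K) :=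
  (powerBasisAux' (monic_X_pow c)).equivFun.toEquiv.trans
    (Equiv.arrowCongr (finCongr (natDegree_X_pow c)) (.refl K))

theorem coeffEquivXPow_apply (x : AdjoinRoot (X ^ c : K[X])) (i : Fin c) :
    coeffEquivXPow c x i = (modByMonicHom (monic_X_pow c) x).coeff i :=
  rfl

theorem root_pow_dvd_iff_coeffEquivXPow {k : ℕ} (hk : k ≤ c) (x : AdjoinRoot (X ^ c : K[X])) :
    root (X ^ c) ^ k ∣ x ↔ ∀ i : Fin c, (i : ℕ) < k → coeffEquivXPow c x i = 0 := by
  conv_lhs => rw [← mk_leftInverse (monic_X_pow c) x, ← mk_X]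
  rw [pow_dvd_map_iff_of_ker mk_surjective (fun _ => mk_eq_zero) hk, X_pow_dvd_iff]
  simp only [coeffEquivXPow_apply]
  exact ⟨fun h i hi => h i hi, fun h i hi => h ⟨i, by omega⟩ hi⟩

end AdjoinRoot

namespace ZMod

variable {p c : ℕ}

theorem val_finEquiv_symm {n : ℕ} [NeZero n] (a : ZMod n) : ((finEquiv n).symm a : ℕ) = a.val := by
  obtain ⟨n, rfl⟩ := Nat.exists_eq_succ_of_ne_zero (NeZero.ne n)
  rfl

theorem finEquiv_apply {n : ℕ} [NeZero n] (i : Fin n) : finEquiv n i = (i : ℕ) := by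
  obtain ⟨n, rfl⟩ := Nat.exists_eq_succ_of_ne_zero (NeZero.ne n)
  exact (Fin.cast_val_eq_self i).symm

theorem intCast_eq_zero_iff_pow_dvd (a : ℤ) : (a : ZMod (p ^ c)) = 0 ↔ (p : ℤ) ^ c ∣ a := by
  rw [intCast_zmod_eq_zero_iff_dvd, Nat.cast_pow]

theorem mul_eq_zero_iff_exists_pow_dvd (hp : p.Prime) (x y : ZMod (p ^ c)) :
    x * y = 0 ↔ ∃ j k, j + k = c ∧ (p : ZMod (p ^ c)) ^ j ∣ x ∧ (p : ZMod (p ^ c)) ^ k ∣ y := by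
  simpa using mul_eq_zero_iff_exists_pow_dvd_of_ker (π := Int.castRingHom _)
    intCast_surjective intCast_eq_zero_iff_pow_dvd (Nat.prime_iff_prime_int.mp hp) x y

variable (p c) in
/-- The base-`p` digits of an element of `ZMod (p ^ c)`, least significant first. -/
def digitsEquiv [NeZero p] : ZMod (p ^ c) ≃ (Fin c → ZMod p) :=
  (finEquiv (p ^ c)).symm.toEquiv.trans <|
    finFunctionFinEquiv.symm.trans <| Equiv.arrowCongr (.refl _) (finEquiv p).toEquiv

theorem digitsEquiv_apply [NeZero p] (a : ZMod (p ^ c)) (i : Fin c) :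
    digitsEquiv p c a i = ((a.val / p ^ (i : ℕ) : ℕ) : ZMod p) := by
  simp [digitsEquiv, finEquiv_apply, val_finEquiv_symm, finFunctionFinEquiv]

theorem natCast_pow_dvd_natCast_iff {k : ℕ} (hk : k ≤ c) (n : ℕ) :
    (p : ZMod (p ^ c)) ^ k ∣ (n : ZMod (p ^ c)) ↔ p ^ k ∣ n := by
  have h := pow_dvd_map_iff_of_ker (π := Int.castRingHom (ZMod (p ^ c)))
    intCast_surjective intCast_eq_zero_iff_pow_dvd hk (n : ℤ)
  rw [← Int.natCast_dvd_natCast, Nat.cast_pow]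
  rwa [eq_intCast, eq_intCast, Int.cast_natCast, Int.cast_natCast] at h

theorem natCast_pow_dvd_iff_digitsEquiv [NeZero p] {k : ℕ} (hk : k ≤ c) (a : ZMod (p ^ c)) :
    (p : ZMod (p ^ c)) ^ k ∣ a ↔ ∀ i : Fin c, (i : ℕ) < k → digitsEquiv p c a i = 0 := by
  conv_lhs => rw [← natCast_zmod_val a]
  simp only [natCast_pow_dvd_natCast_iff hk, Nat.pow_dvd_iff_forall_dvd_div_pow, digitsEquiv_apply,
    natCast_eq_zero_iff]
  exact ⟨fun h i hi => h i hi, fun h i hi => h ⟨i, by omega⟩ hi⟩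

end ZMod

theorem truncR_zdGraph_iso_zmod_general (p c : ℕ) (hp : p.Prime) :
    ∃ Ψ : nzdSet (truncR p c) ≃ nzdSet (ZMod (p ^ c)),
      ∀ f g : nzdSet (truncR p c), f ≠ g →
        ((f : truncR p c) * (g : truncR p c) = 0 ↔
          (Ψ f : ZMod (p ^ c)) * (Ψ g : ZMod (p ^ c)) = 0) := by
  have : Fact p.Prime := ⟨hp⟩
  let Φ : AdjoinRoot (X ^ c : (ZMod p)[X]) ≃ ZMod (p ^ c) :=
    (AdjoinRoot.coeffEquivXPow c).trans (ZMod.digitsEquiv p c).symm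
  have hdvd : ∀ k ≤ c, ∀ x : AdjoinRoot (X ^ c : (ZMod p)[X]),
      AdjoinRoot.root (X ^ c) ^ k ∣ x ↔ (p : ZMod (p ^ c)) ^ k ∣ Φ x := fun k hk x => by
    rw [AdjoinRoot.root_pow_dvd_iff_coeffEquivXPow hk, ZMod.natCast_pow_dvd_iff_digitsEquiv hk,
      Equiv.trans_apply, Equiv.apply_symm_apply]
  have hΦ : ∀ x y, x * y = 0 ↔ Φ x * Φ y = 0 :=
    mul_eq_zero_iff_of_pow_dvd_iff AdjoinRoot.mul_eq_zero_iff_exists_root_pow_dvd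
      (ZMod.mul_eq_zero_iff_exists_pow_dvd hp) hdvd
  exact ⟨nzdSetCongr Φ hΦ, fun f g _ => hΦ f.1 g.1⟩

/-- For every prime `p` and `c ≥ 2`, the zero-divisor graph of
`𝔽_p[x]/(x^c)` is isomorphic to the zero-divisor graph of `ℤ/p^cℤ`: there is a
bijection `Ψ` between the nonzero zero-divisors such that for distinct `f, g`
one has `f·g = 0` iff `Ψ(f)·Ψ(g) = 0`. -/
theorem truncR_zdGraph_iso_zmod (p c : ℕ) (hp : p.Prime) (hc : 2 ≤ c) :
    ∃ Ψ : nzdSet (truncR p c) ≃ nzdSet (ZMod (p ^ c)),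
      ∀ f g : nzdSet (truncR p c), f ≠ g →
        ((f : truncR p c) * (g : truncR p c) = 0 ↔
          (Ψ f : ZMod (p ^ c)) * (Ψ g : ZMod (p ^ c)) = 0) :=
  truncR_zdGraph_iso_zmod_general p c hp
end
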